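/- arXiv:2308.06789 — 2 statements merged into one kernel-verified Lean document; each statement's English description precedes it below -/
import Mathlib

section
/- If the set cpot(a) := {x : ∃r (x ⧏ r ∈ a)} exists, then cpot(a) is wand-potent, i.e., every x with x ⧏ r ∈ cpot(a) for some r satisfies x ∈ cpot(a). -/
/-- `x` is a subset of `r` (with respect to the membership relation `mem`). -/
def wsSub {M : Type*} (mem : M → M → Prop) (x r : M) : Prop :=
  ∀ y, mem y x → mem y r

/-- `x` is found at `r`:  either `x` is bland and `x ⊆ r`, or some wand-tap of a member
of `r` yields `x`. -/
def wsFoundAt {M : Type*} (Bland : M → Prop) (mem : M → M → Prop)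
    (Tap : M → M → M → Prop) (x r : M) : Prop :=
  (Bland x ∧ wsSub mem x r) ∨ ∃ w b, mem b r ∧ Tap w b x

/-- `x ⧏∈ a`: there is `r ∈ a` with `x` found at `r`. -/
def wsFoundIn {M : Type*} (Bland : M → Prop) (mem : M → M → Prop)
    (Tap : M → M → M → Prop) (x a : M) : Prop :=
  ∃ r, wsFoundAt Bland mem Tap x r ∧ mem r a

/-- `p` is (a) `cpot a`: a bland set whose members are exactly those `x` with `x ⧏∈ a`. -/
def wsIsCpot {M : Type*} (Bland : M → Prop) (mem : M → M → Prop)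
    (Tap : M → M → M → Prop) (a p : M) : Prop :=
  Bland p ∧ ∀ x, mem x p ↔ wsFoundIn Bland mem Tap x a

/-- `i` is the (bland) intersection of `a` and `h`. -/
def wsIsInter {M : Type*} (Bland : M → Prop) (mem : M → M → Prop) (a h i : M) : Prop :=
  Bland i ∧ ∀ x, mem x i ↔ (mem x a ∧ mem x h)

/-- `h` is a wistory: bland, and every `a ∈ h` equals `cpot (a ∩ h)`. -/
def wsWistory {M : Type*} (Bland : M → Prop) (mem : M → M → Prop)
    (Tap : M → M → M → Prop) (h : M) : Prop :=
  Bland h ∧ ∀ a, mem a h → ∃ i, wsIsInter Bland mem a h i ∧ wsIsCpot Bland mem Tap i a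

/-- `s` is a wevel: `s = cpot h` for some wistory `h`. -/
def wsWevel {M : Type*} (Bland : M → Prop) (mem : M → M → Prop)
    (Tap : M → M → M → Prop) (s : M) : Prop :=
  ∃ h, wsWistory Bland mem Tap h ∧ wsIsCpot Bland mem Tap h s

/-- `p` is wand-potent: closed under `⧏∈`. -/
def wsWandPotent {M : Type*} (Bland : M → Prop) (mem : M → M → Prop)
    (Tap : M → M → M → Prop) (p : M) : Prop :=
  ∀ x, wsFoundIn Bland mem Tap x p → mem x p

/-- `a` is wand-transitive: every member of `a` is found at `a`. -/
def wsWandTransitive {M : Type*} (Bland : M → Prop) (mem : M → M → Prop)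
    (Tap : M → M → M → Prop) (a : M) : Prop :=
  ∀ x, mem x a → wsFoundAt Bland mem Tap x a

/-- `s` is `wev a`: the `∈`-least wevel at which `a` is found. -/
def wsIsWevOf {M : Type*} (Bland : M → Prop) (mem : M → M → Prop)
    (Tap : M → M → M → Prop) (a s : M) : Prop :=
  wsWevel Bland mem Tap s ∧ wsFoundAt Bland mem Tap a s ∧
    ∀ r, wsWevel Bland mem Tap r → wsFoundAt Bland mem Tap a r → ¬ mem r s

section FoundAt

variable {M : Type*} {Bland : M → Prop} {mem : M → M → Prop} {Tap : M → M → M → Prop}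

theorem wsSub_of_not_bland (hInNB : ∀ x a, mem x a → Bland a) {r : M} (hr : ¬ Bland r)
    (s : M) : wsSub mem r s :=
  fun y hy => absurd (hInNB y r hy) hr

/-- A tap is not bland, hence has no members; a set with a member is bland, hence not a tap. -/
theorem wsFoundAt_trans (hInNB : ∀ x a, mem x a → Bland a)
    (hTapNB : ∀ w a c, Tap w a c → ¬ Bland c) {x r s : M}
    (hxr : wsFoundAt Bland mem Tap x r) (hrs : wsFoundAt Bland mem Tap r s) :
    wsFoundAt Bland mem Tap x s := by
  rcases hxr with ⟨hxB, hxr⟩ | ⟨w, b, hbr, htap⟩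
  · refine Or.inl ⟨hxB, fun y hy => ?_⟩
    rcases hrs with ⟨-, hrs⟩ | ⟨w', b', -, htap'⟩
    · exact hrs y (hxr y hy)
    · exact wsSub_of_not_bland hInNB (hTapNB w' b' r htap') s y (hxr y hy)
  · rcases hrs with ⟨-, hrs⟩ | ⟨w', b', -, htap'⟩
    · exact Or.inr ⟨w, b, hrs b hbr, htap⟩
    · exact absurd (hInNB b r hbr) (hTapNB w' b' r htap')

end FoundAt

/-- If cpot(a) exists, then cpot(a) is wand-potent. -/
theorem cpot_wandPotent {M : Type*} (Bland Wand : M → Prop) (mem : M → M → Prop)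
    (Tap : M → M → M → Prop)
    (hInNB : ∀ x a, mem x a → Bland a)
    (hTapNB : ∀ w a c, Tap w a c → Wand w ∧ ¬ Bland c)
    (a p : M) (hp : wsIsCpot Bland mem Tap a p) :
    wsWandPotent Bland mem Tap p := by
  rintro x ⟨r, hxr, hrp⟩
  obtain ⟨s, hrs, hsa⟩ := (hp.2 r).1 hrp
  exact (hp.2 x).2
    ⟨s, wsFoundAt_trans hInNB (fun w b c h => (hTapNB w b c h).2) hxr hrs, hsa⟩
end

section
/- s is a wevel if and only if s = cpot({r ∈ s : r is a wevel}). -/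
/-! Members of a wistory are wand-potent, so Russell's argument with separation shows that `∈` is
well founded on a wistory: the intersection of all members failing a property would be a
wand-potent member of itself. By induction along `∈`, a member `b ∈ a` of a wistory `h` is a
subset of `a`, so each `q ∈ h` is the wevel `cpot (q ∩ h)`, with `q ∩ h` again a wistory.
Hence every `x` in a wevel `s = cpot h` is found at a wevel `q ∈ h ∩ s`, which gives
`s = cpot k` for `k` the wevels in `s`. Conversely such a `k` is a wistory: a wevel `a ∈ k` is
wand-transitive, hence `a ⊆ s`, and `a ∩ k` consists of the wevels in `a`, whose `cpot` is `a`. -/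

section Wevel

variable {M : Type*} {Bland : M → Prop} {mem : M → M → Prop} {Tap : M → M → M → Prop}

theorem wsFoundAt.mono {x r s : M} (hxr : wsFoundAt Bland mem Tap x r) (hrs : wsSub mem r s) :
    wsFoundAt Bland mem Tap x s := by
  rcases hxr with ⟨hx, hxr⟩ | ⟨w, b, hb, htap⟩
  exacts [Or.inl ⟨hx, fun y hy => hrs y (hxr y hy)⟩, Or.inr ⟨w, b, hrs b hb, htap⟩]

theorem wsFoundAt.sub_of_bland (hTapNB : ∀ w a c, Tap w a c → ¬ Bland c) {x r : M}
    (hxr : wsFoundAt Bland mem Tap x r) (hx : Bland x) : wsSub mem x r := by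
  rcases hxr with ⟨-, hxr⟩ | ⟨w, b, -, htap⟩
  exacts [hxr, absurd hx (hTapNB w b x htap)]

theorem wsFoundAt.trans (hInNB : ∀ x a, mem x a → Bland a)
    (hTapNB : ∀ w a c, Tap w a c → ¬ Bland c) {x r q : M}
    (hxr : wsFoundAt Bland mem Tap x r) (hrq : wsFoundAt Bland mem Tap r q) :
    wsFoundAt Bland mem Tap x q := by
  rcases hrq with ⟨-, hrq⟩ | ⟨w, b, -, htap⟩
  · exact hxr.mono hrq
  -- a tapped `r` is not bland, hence has no members
  have hr : ¬ Bland r := hTapNB w b r htap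
  rcases hxr with ⟨hx, hxr⟩ | ⟨-, c, hc, -⟩
  · exact Or.inl ⟨hx, fun y hy => absurd (hInNB y r (hxr y hy)) hr⟩
  · exact absurd (hInNB c r hc) hr

theorem wsIsCpot.wandPotent (hInNB : ∀ x a, mem x a → Bland a)
    (hTapNB : ∀ w a c, Tap w a c → ¬ Bland c) {h s : M} (hs : wsIsCpot Bland mem Tap h s) :
    wsWandPotent Bland mem Tap s := by
  rintro x ⟨r, hxr, hr⟩
  obtain ⟨q, hrq, hq⟩ := (hs.2 r).1 hr
  exact (hs.2 x).2 ⟨q, hxr.trans hInNB hTapNB hrq, hq⟩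

theorem wsWandPotent.notMem_self
    (hSep : ∀ (φ : M → Prop) a, Bland a → ∃ b, Bland b ∧ ∀ x, mem x b ↔ (mem x a ∧ φ x))
    {p : M} (hpot : wsWandPotent Bland mem Tap p) (hp : Bland p) : ¬ mem p p := by
  intro hpp
  obtain ⟨R, hRb, hR⟩ := hSep (fun x => ¬ mem x x) p hp
  have hRp : mem R p := hpot R ⟨p, Or.inl ⟨hRb, fun y hy => ((hR y).1 hy).1⟩, hpp⟩
  have hRR := hR R
  tauto

namespace wsWistory

variable {h : M}

theorem bland_of_mem (hw : wsWistory Bland mem Tap h) {a : M} (ha : mem a h) : Bland a := by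
  obtain ⟨i, -, hia⟩ := hw.2 a ha
  exact hia.1

theorem mem_iff_of_mem (hw : wsWistory Bland mem Tap h) {a : M} (ha : mem a h) (x : M) :
    mem x a ↔ ∃ c, wsFoundAt Bland mem Tap x c ∧ mem c a ∧ mem c h := by
  obtain ⟨i, hi, hia⟩ := hw.2 a ha
  simp only [hia.2 x, wsFoundIn, hi.2]

theorem wandPotent_of_mem (hInNB : ∀ x a, mem x a → Bland a)
    (hTapNB : ∀ w a c, Tap w a c → ¬ Bland c) (hw : wsWistory Bland mem Tap h) {a : M}
    (ha : mem a h) : wsWandPotent Bland mem Tap a := by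
  obtain ⟨i, -, hia⟩ := hw.2 a ha
  exact hia.wandPotent hInNB hTapNB

theorem induction (hInNB : ∀ x a, mem x a → Bland a)
    (hTapNB : ∀ w a c, Tap w a c → ¬ Bland c)
    (hSep : ∀ (φ : M → Prop) a, Bland a → ∃ b, Bland b ∧ ∀ x, mem x b ↔ (mem x a ∧ φ x))
    (hw : wsWistory Bland mem Tap h) (P : M → Prop)
    (step : ∀ a, mem a h → (∀ b, mem b h → mem b a → P b) → P a) : ∀ a, mem a h → P a := by
  by_contra! ⟨a₀, ha₀, hPa₀⟩
  obtain ⟨E, hEb, hE⟩ := hSep (fun x => ∀ a, mem a h → ¬ P a → mem x a) a₀ (hw.bland_of_mem ha₀)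
  have hE' : ∀ x, mem x E ↔ ∀ a, mem a h → ¬ P a → mem x a := fun x =>
    ⟨fun hx => ((hE x).1 hx).2, fun hx => (hE x).2 ⟨hx a₀ ha₀ hPa₀, hx⟩⟩
  have hEpot : wsWandPotent Bland mem Tap E := by
    rintro x ⟨c, hxc, hcE⟩
    exact (hE' x).2 fun a ha hPa =>
      hw.wandPotent_of_mem hInNB hTapNB ha x ⟨c, hxc, (hE' c).1 hcE a ha hPa⟩
  refine hEpot.notMem_self hSep hEb ((hE' E).2 fun a ha hPa => ?_)
  obtain ⟨b, hb, hba, hPb⟩ : ∃ b, mem b h ∧ mem b a ∧ ¬ P b := by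
    by_contra! hgood
    exact hPa (step a ha hgood)
  exact hw.wandPotent_of_mem hInNB hTapNB ha E
    ⟨b, Or.inl ⟨hEb, fun y hy => (hE' y).1 hy b hb hPb⟩, hba⟩

theorem sub_of_mem (hInNB : ∀ x a, mem x a → Bland a)
    (hTapNB : ∀ w a c, Tap w a c → ¬ Bland c)
    (hSep : ∀ (φ : M → Prop) a, Bland a → ∃ b, Bland b ∧ ∀ x, mem x b ↔ (mem x a ∧ φ x))
    (hw : wsWistory Bland mem Tap h) {a b : M} (ha : mem a h) (hb : mem b h) (hba : mem b a) :
    wsSub mem b a := by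
  refine hw.induction hInNB hTapNB hSep (fun a => ∀ b, mem b h → mem b a → wsSub mem b a)
    (fun a ha ih b hb hba y hyb => ?_) a ha b hb hba
  obtain ⟨e, hbe, hea, he⟩ := (hw.mem_iff_of_mem ha b).1 hba
  have hye : mem y e := hbe.sub_of_bland hTapNB (hw.bland_of_mem hb) y hyb
  obtain ⟨d, hyd, hdme, hd⟩ := (hw.mem_iff_of_mem he y).1 hye
  have hde : wsFoundAt Bland mem Tap d e := Or.inl ⟨hw.bland_of_mem hd, ih e he hea d hd hdme⟩
  exact (hw.mem_iff_of_mem ha y).2 ⟨e, hyd.trans hInNB hTapNB hde, hea, he⟩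

theorem wevel_of_mem (hInNB : ∀ x a, mem x a → Bland a)
    (hTapNB : ∀ w a c, Tap w a c → ¬ Bland c)
    (hSep : ∀ (φ : M → Prop) a, Bland a → ∃ b, Bland b ∧ ∀ x, mem x b ↔ (mem x a ∧ φ x))
    (hw : wsWistory Bland mem Tap h) {q : M} (hq : mem q h) : wsWevel Bland mem Tap q := by
  obtain ⟨i, hi, hiq⟩ := hw.2 q hq
  refine ⟨i, ⟨hi.1, fun a hai => ?_⟩, hiq⟩
  obtain ⟨haq, hah⟩ := (hi.2 a).1 hai
  obtain ⟨j, hj, hja⟩ := hw.2 a hah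
  refine ⟨j, ⟨hj.1, fun x => ?_⟩, hja⟩
  have hxq : mem x a → mem x q := hw.sub_of_mem hInNB hTapNB hSep hq hah haq x
  rw [hj.2, hi.2]
  tauto

end wsWistory

theorem wsWevel.wandTransitive {s : M} (hsw : wsWevel Bland mem Tap s) :
    wsWandTransitive Bland mem Tap s := by
  obtain ⟨h, hw, hs⟩ := hsw
  intro x hx
  obtain ⟨q, hxq, hq⟩ := (hs.2 x).1 hx
  refine hxq.mono fun y hy => (hs.2 y).2 ?_
  obtain ⟨c, hyc, -, hc⟩ := (hw.mem_iff_of_mem hq y).1 hy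
  exact ⟨c, hyc, hc⟩

theorem wsWevel.exists_isCpot_wevels (hInNB : ∀ x a, mem x a → Bland a)
    (hTapNB : ∀ w a c, Tap w a c → ¬ Bland c)
    (hSep : ∀ (φ : M → Prop) a, Bland a → ∃ b, Bland b ∧ ∀ x, mem x b ↔ (mem x a ∧ φ x))
    {s : M} (hsw : wsWevel Bland mem Tap s) :
    ∃ k, Bland k ∧ (∀ x, mem x k ↔ (mem x s ∧ wsWevel Bland mem Tap x)) ∧
      wsIsCpot Bland mem Tap k s := by
  obtain ⟨h, hw, hs⟩ := hsw
  obtain ⟨k, hkb, hk⟩ := hSep (wsWevel Bland mem Tap) s hs.1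
  refine ⟨k, hkb, hk, hs.1, fun x => ⟨fun hx => ?_, fun ⟨r, hxr, hr⟩ => ?_⟩⟩
  · obtain ⟨q, hxq, hq⟩ := (hs.2 x).1 hx
    have hqs : mem q s := (hs.2 q).2 ⟨q, Or.inl ⟨hw.bland_of_mem hq, fun _ hy => hy⟩, hq⟩
    exact ⟨q, hxq, (hk q).2 ⟨hqs, hw.wevel_of_mem hInNB hTapNB hSep hq⟩⟩
  · exact hs.wandPotent hInNB hTapNB x ⟨r, hxr, ((hk r).1 hr).1⟩

theorem wsWevel_of_isCpot_wevels (hInNB : ∀ x a, mem x a → Bland a)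
    (hTapNB : ∀ w a c, Tap w a c → ¬ Bland c)
    (hSep : ∀ (φ : M → Prop) a, Bland a → ∃ b, Bland b ∧ ∀ x, mem x b ↔ (mem x a ∧ φ x))
    {s k : M} (hkb : Bland k) (hk : ∀ x, mem x k ↔ (mem x s ∧ wsWevel Bland mem Tap x))
    (hks : wsIsCpot Bland mem Tap k s) : wsWevel Bland mem Tap s := by
  refine ⟨k, ⟨hkb, fun a ha => ?_⟩, hks⟩
  obtain ⟨has, haw⟩ := (hk a).1 ha
  have has' : wsSub mem a s := fun y hy =>
    hks.wandPotent hInNB hTapNB y ⟨a, haw.wandTransitive y hy, has⟩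
  obtain ⟨ka, hkab, hka, hkaa⟩ := haw.exists_isCpot_wevels hInNB hTapNB hSep
  refine ⟨ka, ⟨hkab, fun x => ?_⟩, hkaa⟩
  have hxs := has' x
  rw [hka, hk]
  tauto

end Wevel

theorem wevel_iff_cpot_wevels_general {M : Type*} (Bland Wand : M → Prop) (mem : M → M → Prop)
    (Tap : M → M → M → Prop)
    (hInNB : ∀ x a, mem x a → Bland a)
    (hTapNB : ∀ w a c, Tap w a c → Wand w ∧ ¬ Bland c)
    (hSep : ∀ (φ : M → Prop) a, Bland a → ∃ b, Bland b ∧ ∀ x, mem x b ↔ (mem x a ∧ φ x)) :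
    ∀ s, wsWevel Bland mem Tap s ↔
      ∃ k, Bland k ∧ (∀ x, mem x k ↔ (mem x s ∧ wsWevel Bland mem Tap x)) ∧
        wsIsCpot Bland mem Tap k s := by
  have hTapNB' : ∀ w a c, Tap w a c → ¬ Bland c := fun w a c htap => (hTapNB w a c htap).2
  intro s
  constructor
  · exact wsWevel.exists_isCpot_wevels hInNB hTapNB' hSep
  · rintro ⟨k, hkb, hk, hks⟩
    exact wsWevel_of_isCpot_wevels hInNB hTapNB' hSep hkb hk hks

/-- s is a wevel iff s = cpot({r ∈ s : r is a wevel}). -/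
theorem wevel_iff_cpot_wevels {M : Type*} (Bland Wand : M → Prop) (mem : M → M → Prop)
    (Tap : M → M → M → Prop)
    (hInNB : ∀ x a, mem x a → Bland a)
    (hTapNB : ∀ w a c, Tap w a c → Wand w ∧ ¬ Bland c)
    (hExt : ∀ a b, Bland a → Bland b → (∀ x, mem x a ↔ mem x b) → a = b)
    (hSep : ∀ (φ : M → Prop) a, Bland a → ∃ b, Bland b ∧ ∀ x, mem x b ↔ (mem x a ∧ φ x)) :
    ∀ s, wsWevel Bland mem Tap s ↔
      ∃ k, Bland k ∧ (∀ x, mem x k ↔ (mem x s ∧ wsWevel Bland mem Tap x)) ∧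
        wsIsCpot Bland mem Tap k s :=
  wevel_iff_cpot_wevels_general Bland Wand mem Tap hInNB hTapNB hSep
end
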